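/- Let f : {0,1}^n → {0,1} and let i_1, i_2, k be distinct indices such that x_{i_1} is inessential in f_{i_2=k} and x_{i_2} is inessential in f_{i_1=k}. If moreover x_{i_1} is inessential in f_{i_2=i_1}, then x_{i_1} is inessential in f. -/

import Mathlib

open Classical

/-- Boolean functions of arity `n` over GF(2). -/
abbrev BFn (n : ℕ) := (Fin n → ZMod 2) → ZMod 2

/-- Boolean functions of arbitrary arity. -/
abbrev BF := Σ n : ℕ, BFn n

/-- `g` is a simple minor of `f`. -/
def Minor {m n : ℕ} (g : BFn m) (f : BFn n) : Prop :=
  ∃ σ : Fin n → Fin m, ∀ a : Fin m → ZMod 2, g a = f (fun i => a (σ i))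

def MinorS (G F : BF) : Prop := Minor G.2 F.2

def EquivS (G F : BF) : Prop := MinorS G F ∧ MinorS F G

def StrictMinorS (G F : BF) : Prop := MinorS G F ∧ ¬ MinorS F G

/-- `x i` is an essential variable of `f`. -/
def Essential {n : ℕ} (f : BFn n) (i : Fin n) : Prop :=
  ∃ a b : Fin n → ZMod 2, (∀ j, j ≠ i → a j = b j) ∧ f a ≠ f b

noncomputable def essArity {n : ℕ} (f : BFn n) : ℕ :=
  (Finset.univ.filter fun i => Essential f i).card

noncomputable def essS (F : BF) : ℕ := essArity F.2

/-- `f_{i=j}` : identify variable `i` with variable `j`. -/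
def identify {n : ℕ} (f : BFn n) (i j : Fin n) : BFn n :=
  fun a => f (fun t => if t = i then a j else a t)

/-- `G` is a lower cover of `F` in the poset of equivalence classes. -/
def LowerCover (G F : BF) : Prop :=
  StrictMinorS G F ∧ ¬ ∃ H : BF, StrictMinorS G H ∧ StrictMinorS H F

/-- `F` is join-irreducible: some strict minor dominates all strict minors. -/
def JoinIrred (F : BF) : Prop :=
  ∃ F' : BF, StrictMinorS F' F ∧ ∀ G : BF, StrictMinorS G F → MinorS G F'

noncomputable def arityGap (F : BF) : ℕ :=
  sInf {d : ℕ | ∃ G : BF, StrictMinorS G F ∧ d = essS F - essS G}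

/-- Hypergraphs on vertex set `Fin n`. -/
abbrev HG (n : ℕ) := Finset (Finset (Fin n))

abbrev HGS := Σ n : ℕ, HG n

/-- `h` is a quotient map from `(Fin m, E')` to `(Fin n, E)`. -/
def IsQuotientMap {m n : ℕ} (E' : HG m) (E : HG n) (h : Fin m → Fin n) : Prop :=
  ∀ S : Finset (Fin n), S ∈ E ↔ Odd (E'.filter (fun T => T.image h = S)).card

/-- `H ⪯ H'` : there is a quotient map from `H'` to `H`. -/
def MinorH (H H' : HGS) : Prop :=
  ∃ h : Fin H'.1 → Fin H.1, IsQuotientMap H'.2 H.2 h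

/-- The hypergraph `H_{h'}` determined by a hypergraph and a map. -/
noncomputable def quotientHG {m n : ℕ} (E' : HG m) (h : Fin m → Fin n) : HG n :=
  Finset.univ.filter fun S => Odd (E'.filter (fun T => T.image h = S)).card

/-- The Boolean function of a hypergraph: evaluation of `Σ_{E} Π_{i ∈ E} x_i`. -/
def fHG {n : ℕ} (E : HG n) : BFn n :=
  fun a => ∑ S ∈ E, ∏ i ∈ S, a i

/-- A Steiner system (`2-(n,k,1)` design). -/
def IsSteiner {n : ℕ} (k : ℕ) (E : HG n) : Prop :=
  (∀ S ∈ E, S.card = k) ∧ ∀ i j : Fin n, i ≠ j → ∃! S, S ∈ E ∧ i ∈ S ∧ j ∈ S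

/-- Vertex set of the identification hypergraph `H_e`, `e = {i,j}`:
`(V \ e) ∪ {l_e}` where `none` plays the role of the new vertex `l_e`. -/
abbrev IdVert {n : ℕ} (i j : Fin n) := Option {x : Fin n // x ≠ i ∧ x ≠ j}

/-- The underlying subset of `V` of a set of vertices of `H_e` (ignoring `l_e`). -/
def baseSet {n : ℕ} {i j : Fin n} (E : Finset (IdVert i j)) : Finset (Fin n) :=
  E.biUnion fun o => o.elim ∅ fun x => {x.val}

/-- Exactly one or all three of `p`, `q`, `r` hold. -/
def OneOrAllThree (p q r : Prop) : Prop :=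
  (p ∧ ¬q ∧ ¬r) ∨ (¬p ∧ q ∧ ¬r) ∨ (¬p ∧ ¬q ∧ r) ∨ (p ∧ q ∧ r)

/-- The hyperedges of the identification hypergraph `H_e`, `e = {i,j}`. -/
noncomputable def idEdges {n : ℕ} (𝓔 : HG n) (i j : Fin n) :
    Finset (Finset (IdVert i j)) :=
  Finset.univ.filter fun E =>
    (none ∉ E ∧ baseSet E ∈ 𝓔) ∨
    (none ∈ E ∧ OneOrAllThree (insert i (insert j (baseSet E)) ∈ 𝓔)
      (insert i (baseSet E) ∈ 𝓔) (insert j (baseSet E) ∈ 𝓔))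

/-- The hyperedges of the induced hypergraph `H_{-e}` on `V \ e`, `e = {i,j}`. -/
noncomputable def minusEdges {n : ℕ} (𝓔 : HG n) (i j : Fin n) :
    Finset (Finset {x : Fin n // x ≠ i ∧ x ≠ j}) :=
  Finset.univ.filter fun E => E.image Subtype.val ∈ 𝓔

/-- `φ` is an isomorphism of hypergraphs. -/
def IsHGIso {α β : Type*} (𝓐 : Finset (Finset α)) (𝓑 : Finset (Finset β))
    (φ : α ≃ β) : Prop :=
  ∀ E : Finset α, E ∈ 𝓐 ↔ E.image φ ∈ 𝓑

/-- The (loopless) graph associated with a set of 2-element edges. -/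
def graphOf {n : ℕ} (𝓔 : HG n) : SimpleGraph (Fin n) where
  Adj v w := v ≠ w ∧ ({v, w} : Finset (Fin n)) ∈ 𝓔
  symm := by
    refine ⟨fun v w h => ?_⟩
    exact ⟨h.1.symm, by rw [Finset.pair_comm]; exact h.2⟩
  loopless := by
    refine ⟨fun v h => ?_⟩
    exact h.1 rfl

/-! Over GF(2), fix all coordinates of `a` except `x_{i1}`. If `a i2 = a k`, then `f` coincides
with `f_{i2=k}` at these points, so it does not depend on `x_{i1}`. Otherwise `x_{i1}` ranges over
`{a k, a i2}`. At `x_{i1} = a k`, `f` coincides with `f_{i1=k}`, so `x_{i2}` may be reset to `a k`.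
Now `x_{i1} = x_{i2}`, and `f_{i2=i1}` lets this common value move to `a i2`, which is the point
with `x_{i1} = a i2`. -/

open Function

lemma not_essential_iff {n : ℕ} {g : BFn n} {i : Fin n} :
    ¬ Essential g i ↔ ∀ a x, g (update a i x) = g a := by
  constructor
  · intro h a x
    by_contra hne
    exact h ⟨update a i x, a, fun j hj => update_of_ne hj x a, hne⟩
  · rintro h ⟨a, b, hab, hne⟩
    have hb : update a i (b i) = b := by
      ext j
      rcases eq_or_ne j i with rfl | hj
      · exact update_self j (b j) a
      · rw [update_of_ne hj, hab j hj]
    exact hne (by rw [← hb, h])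

lemma identify_apply {n : ℕ} (f : BFn n) (i j : Fin n) (a : Fin n → ZMod 2) :
    identify f i j a = f (update a i (a j)) :=
  congrArg f (funext fun t => (update_apply a i (a j) t).symm)

lemma apply_update_of_not_essential_identify {n : ℕ} {f : BFn n} {i j k : Fin n}
    (h : ¬ Essential (identify f j k) i) (hij : i ≠ j) (hik : i ≠ k)
    {a : Fin n → ZMod 2} (ha : a j = a k) (x : ZMod 2) :
    f (update a i x) = f a := by
  have hconst := not_essential_iff.mp h a x
  rwa [identify_apply, identify_apply, update_of_ne hik.symm, ← ha,
    update_eq_self_iff.mpr (update_of_ne hij.symm x a).symm, update_eq_self] at hconst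

lemma apply_update_diag_of_not_essential_identify {n : ℕ} {f : BFn n} {i j : Fin n}
    (h : ¬ Essential (identify f j i) i) (a : Fin n → ZMod 2) (x y : ZMod 2) :
    f (update (update a i x) j x) = f (update (update a i y) j y) := by
  have hconst := not_essential_iff.mp h (update a i x) y
  rw [identify_apply, identify_apply, update_idem, update_self, update_self] at hconst
  exact hconst.symm

lemma ZMod.two_eq_or_eq_of_ne {u v : ZMod 2} (huv : u ≠ v) (x : ZMod 2) : x = u ∨ x = v := by
  revert u v x
  decide

theorem stmt8 {n : ℕ} (f : BFn n) (i1 i2 k : Fin n)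
    (h12 : i1 ≠ i2) (h1k : i1 ≠ k) (h2k : i2 ≠ k)
    (h1 : ¬ Essential (identify f i2 k) i1)
    (h2 : ¬ Essential (identify f i1 k) i2)
    (h3 : ¬ Essential (identify f i2 i1) i1) :
    ¬ Essential f i1 := by
  refine not_essential_iff.mpr fun a x => ?_
  by_cases ha : a i2 = a k
  · exact apply_update_of_not_essential_identify h1 h12 h1k ha x
  have hcross : f (update a i1 (a k)) = f (update a i1 (a i2)) :=
    calc f (update a i1 (a k))
        = f (update (update a i1 (a k)) i2 (a k)) :=
          (apply_update_of_not_essential_identify h2 h12.symm h2k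
            (by rw [update_self, update_of_ne h1k.symm]) _).symm
      _ = f (update (update a i1 (a i2)) i2 (a i2)) :=
          apply_update_diag_of_not_essential_identify h3 a _ _
      _ = f (update a i1 (a i2)) := by
          rw [update_eq_self_iff.mpr (update_of_ne h12.symm _ a).symm]
  have hcollapse : ∀ y, f (update a i1 y) = f (update a i1 (a k)) := fun y => by
    rcases ZMod.two_eq_or_eq_of_ne ha y with rfl | rfl
    exacts [hcross.symm, rfl]
  calc f (update a i1 x)
      = f (update a i1 (a i1)) := (hcollapse x).trans (hcollapse (a i1)).symm
    _ = f a := by rw [update_eq_self]
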